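/- arXiv:1804.07837 — 3 statements merged into one kernel-verified Lean document; each statement's English description precedes it below -/
import Mathlib

section
/- Let v_1, ..., v_k in R^d, ε >= 0, W ⊆ R^d a closed convex cone, and x in R^d. Suppose for every unit vector w in W there exists i in [k] with w^T (v_i - x) <= ε. Then there exist p in the probability simplex Δ^{k-1} and c in the dual cone W° such that ||Σ_i p_i v_i + c - x|| <= ε. -/
open Finset Pointwise RealInnerProductSpace

/-- Hard direction of the decomposition lemma: if every unit direction `w ∈ W`
satisfies `⟪w, v i - x⟫ ≤ ε` for some `i`, then there exist a probability vector `p`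
and a dual-cone element `c` with `‖∑ p i • v i + c - x‖ ≤ ε`. -/
theorem directional_implies_decomposition
    {d k : ℕ} (hk : 0 < k) (v : Fin k → EuclideanSpace ℝ (Fin d)) (ε : ℝ) (hε : 0 ≤ ε)
    (W : Set (EuclideanSpace ℝ (Fin d)))
    (hclosed : IsClosed W) (hconv : Convex ℝ W)
    (hcone : ∀ β : ℝ, 0 ≤ β → ∀ w ∈ W, β • w ∈ W)
    (x : EuclideanSpace ℝ (Fin d))
    (hdir : ∀ w ∈ W, ‖w‖ = 1 → ∃ i : Fin k, (inner ℝ w (v i - x) : ℝ) ≤ ε) :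
    ∃ (p : Fin k → ℝ) (c : EuclideanSpace ℝ (Fin d)),
      (∀ i, 0 ≤ p i) ∧ (∑ i, p i = 1) ∧ (∀ w ∈ W, (0 : ℝ) ≤ inner ℝ w c) ∧
      ‖(∑ i, p i • v i) + c - x‖ ≤ ε := by
  classical
  -- the uniform probability vector
  have hkR : (0 : ℝ) < k := by exact_mod_cast hk
  have huni : ∀ i : Fin k, (0:ℝ) ≤ (k : ℝ)⁻¹ := fun _ => by positivity
  have hunisum : ∑ _i : Fin k, (k : ℝ)⁻¹ = 1 := by
    simp [Finset.sum_const, Finset.card_univ]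
    field_simp
  by_cases hWne : W.Nonempty
  swap
  · -- W is empty: everything about W is vacuous
    refine ⟨fun _ => (k : ℝ)⁻¹, x - ∑ i, (k : ℝ)⁻¹ • v i, huni, hunisum,
      fun w hw => absurd ⟨w, hw⟩ hWne, ?_⟩
    simp [add_sub_cancel]
    exact hε
  -- W nonempty; build the convex cone structure on W
  have hzero : (0 : EuclideanSpace ℝ (Fin d)) ∈ W := by
    obtain ⟨w, hw⟩ := hWne
    simpa using hcone 0 le_rfl w hw
  let K : ConvexCone ℝ (EuclideanSpace ℝ (Fin d)) :=
    { carrier := W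
      smul_mem' := fun c hc w hw => hcone c hc.le w hw
      add_mem' := fun {a} ha {b} hb => by
        have h := hconv ha hb (by norm_num : (0:ℝ) ≤ (1:ℝ)/2) (by norm_num : (0:ℝ) ≤ (1:ℝ)/2)
          (by norm_num)
        have h2 := hcone (2:ℝ) (by norm_num) _ h
        have he : (2:ℝ) • (((1:ℝ)/2) • a + ((1:ℝ)/2) • b) = a + b := by
          rw [smul_add, smul_smul, smul_smul]
          norm_num
        rwa [he] at h2 }
  have hKcoe : (K : Set (EuclideanSpace ℝ (Fin d))) = W := rfl
  -- the linear map p ↦ ∑ p i • v i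
  let L : (Fin k → ℝ) →ₗ[ℝ] EuclideanSpace ℝ (Fin d) :=
    { toFun := fun p => ∑ i, p i • v i
      map_add' := fun p q => by
        simp [add_smul, Finset.sum_add_distrib]
      map_smul' := fun r p => by
        simp [Finset.smul_sum, smul_smul] }
  have hLcont : Continuous L := L.continuous_of_finiteDimensional
  -- the set S
  let A : Set (EuclideanSpace ℝ (Fin d)) := L '' stdSimplex ℝ (Fin k)
  let Dl : Set (EuclideanSpace ℝ (Fin d)) := (ProperCone.innerDual W : Set (EuclideanSpace ℝ (Fin d)))
  let S : Set (EuclideanSpace ℝ (Fin d)) := A + Dl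
  have hAcomp : IsCompact A := (isCompact_stdSimplex ℝ (Fin k)).image hLcont
  have hAconv : Convex ℝ A := (convex_stdSimplex ℝ (Fin k)).linear_image L
  have hSclosed : IsClosed S := (ProperCone.innerDual W).isClosed.add_left_of_isCompact hAcomp
  have hSconv : Convex ℝ S := hAconv.add ((ProperCone.innerDual W).convex)
  have hdz : (0 : EuclideanSpace ℝ (Fin d)) ∈ ProperCone.innerDual W := by
    simp [ProperCone.mem_innerDual]
  have hmemS : ∀ p : Fin k → ℝ, p ∈ stdSimplex ℝ (Fin k) → ∀ c ∈ ProperCone.innerDual W,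
      L p + c ∈ S := fun p hp c hc => Set.add_mem_add ⟨p, hp, rfl⟩ hc
  have hSne : S.Nonempty := ⟨L (fun _ => (k:ℝ)⁻¹) + 0,
    hmemS _ ⟨huni, hunisum⟩ 0 hdz⟩
  -- project x onto S
  obtain ⟨y, hyS, hymin⟩ :=
    exists_norm_eq_iInf_of_complete_convex hSne (hSclosed.isComplete) hSconv x
  have hvar : ∀ z ∈ S, (inner ℝ (x - y) (z - y) : ℝ) ≤ 0 :=
    (norm_eq_iInf_iff_real_inner_le_zero hSconv hyS).mp hymin
  have hvar' : ∀ z ∈ S, (0:ℝ) ≤ (inner ℝ (y - x) (z - y) : ℝ) := by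
    intro z hz
    have := hvar z hz
    rw [show y - x = -(x - y) by abel, inner_neg_left]
    linarith
  -- decompose y
  obtain ⟨a, ⟨p, hp, rfl⟩, c, hc, rfl⟩ := hyS
  set y : EuclideanSpace ℝ (Fin d) := L p + c with hy
  set w : EuclideanSpace ℝ (Fin d) := y - x with hwdef
  -- ⟪w, c'⟫ ≥ 0 for all c' in the dual cone, hence w ∈ W by bipolar
  have hwdual : ∀ c' ∈ ProperCone.innerDual W, (0:ℝ) ≤ (inner ℝ (w) (c') : ℝ) := by
    intro c' hc'
    have hz : y + c' ∈ S := by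
      have : L p + (c + c') ∈ S := hmemS p hp _ (add_mem hc hc')
      simpa [hy, add_assoc] using this
    have := hvar' _ hz
    simpa [hy] using this
  have hbipolar : ((ProperCone.innerDual (ProperCone.innerDual W : Set (EuclideanSpace ℝ (Fin d)))) :
      Set (EuclideanSpace ℝ (Fin d))) = W := by
    let P : ProperCone ℝ (EuclideanSpace ℝ (Fin d)) :=
      { carrier := W
        add_mem' := fun ha hb => K.add_mem ha hb
        zero_mem' := hzero
        smul_mem' := fun c w hw => hcone c c.2 w hw
        isClosed' := hclosed }
    have h := congrArg (fun C : ProperCone ℝ (EuclideanSpace ℝ (Fin d)) => (C : Set (EuclideanSpace ℝ (Fin d))))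
      (ProperCone.innerDual_innerDual P)
    exact h
  have hwW : w ∈ W := by
    have h1 : w ∈ ((ProperCone.innerDual (ProperCone.innerDual W : Set (EuclideanSpace ℝ (Fin d)))) :
        Set (EuclideanSpace ℝ (Fin d))) :=
      ProperCone.mem_innerDual.mpr (fun z hz => by
        rw [real_inner_comm]; exact hwdual z hz)
    rw [hbipolar] at h1
    exact h1
  -- ⟪w, c⟫ = 0
  have hwc_le : (inner ℝ (w) (c) : ℝ) ≤ 0 := by
    have hz : L p ∈ S := by
      simpa using hmemS p hp 0 hdz
    have := hvar' _ hz
    have h2 : (0:ℝ) ≤ (inner ℝ (w) (-c) : ℝ) := by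
      simpa [hy, show L p - (L p + c) = -c by abel] using this
    rw [inner_neg_right] at h2; linarith
  have hwc : (inner ℝ (w) (c) : ℝ) = 0 := le_antisymm hwc_le (hwdual c hc)
  -- optimality over vertices: ⟪w, y⟫ ≤ ⟪w, v i⟫ for each i
  have hvert : ∀ i : Fin k, (inner ℝ (w) (y) : ℝ) ≤ (inner ℝ (w) (v i) : ℝ) := by
    intro i
    have hei : (fun j => if j = i then (1:ℝ) else 0) ∈ stdSimplex ℝ (Fin k) :=
      ⟨fun j => by by_cases h : j = i <;> simp [h], by simp⟩
    have hLei : L (fun j => if j = i then (1:ℝ) else 0) = v i := by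
      simp [L, ite_smul]
    have hz : v i + c ∈ S := by
      have := hmemS _ hei c hc
      rwa [hLei] at this
    have := hvar' _ hz
    have h2 : (0:ℝ) ≤ (inner ℝ (w) (v i - L p) : ℝ) := by
      simpa [hy, show v i + c - (L p + c) = v i - L p by abel] using this
    rw [inner_sub_right] at h2
    have : (inner ℝ (w) (y) : ℝ) = (inner ℝ (w) (L p) : ℝ) + (inner ℝ (w) (c) : ℝ) := by rw [hy, inner_add_right]
    rw [this, hwc]
    linarith
  -- conclude ‖w‖ ≤ ε
  have hnorm : ‖w‖ ≤ ε := by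
    rcases eq_or_ne w 0 with h0 | h0
    · simp [h0, hε]
    · have hwpos : (0:ℝ) < ‖w‖ := norm_pos_iff.mpr h0
      have hwW' : ‖w‖⁻¹ • w ∈ W := hcone _ (by positivity) w hwW
      have hwn : ‖‖w‖⁻¹ • w‖ = 1 := by
        rw [norm_smul, norm_inv, norm_norm, inv_mul_cancel₀ hwpos.ne']
      obtain ⟨i, hi⟩ := hdir _ hwW' hwn
      rw [real_inner_smul_left] at hi
      have hi' : (inner ℝ (w) (v i - x) : ℝ) ≤ ε * ‖w‖ := by
        rw [inv_mul_le_iff₀ hwpos] at hi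
        linarith [hi]
      have hsq : ‖w‖ ^ 2 = (inner ℝ (w) (y - x) : ℝ) := by
        rw [hwdef, real_inner_self_eq_norm_sq]
      have : ‖w‖ ^ 2 ≤ ε * ‖w‖ := by
        rw [hsq, inner_sub_right]
        have := hvert i
        have h3 : (inner ℝ (w) (v i - x) : ℝ) = (inner ℝ (w) (v i) : ℝ) - (inner ℝ (w) (x) : ℝ) := inner_sub_right _ _ _
        linarith
      nlinarith
  refine ⟨p, c, hp.1, hp.2, ?_, ?_⟩
  · intro w' hw'
    exact hc hw'
  · show ‖L p + c - x‖ ≤ ε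
    exact hnorm
end

section
/- Let {q_1, ..., q_d} ⊂ K ⊂ B(0, R) be a β-barycentric spanner for K, M = (q_1,...,q_d), Q = M M^T, and φ(x) = (1/2) x^T Q^{-1} x. Then for every x in K and every α > 0, φ(α x) <= α² β² d / 2. Moreover, the strong convexity modulus of φ satisfies λ_min(Q^{-1}) >= 1/(R² d). -/
/-!
Write `M` for the matrix with rows `q i`, so that `Q = Mᵀ M` and `∑ i, b i • q i = b ᵥ* M`.
The substitution `x = b ᵥ* M` turns the quadratic form of `Q⁻¹` into the squared Euclidean
norm of the coefficient vector `b`. For `x` in `K` the spanner property bounds the coefficients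
by `β`, giving the first claim; for arbitrary `z`, Cauchy–Schwarz gives
`‖z‖² ≤ ‖b‖² ∑ i, ‖q i‖² ≤ ‖b‖² R² d`, which is the second.
-/

open Matrix Finset

section

variable {m n α : Type*} [Fintype m]

theorem sum_vecMulVec_self_eq_transpose_mul_self [CommSemiring α] (q : m → n → α) :
    ∑ i, vecMulVec (q i) (q i) = (of q)ᵀ * of q := by
  ext a b
  simp only [Matrix.sum_apply, vecMulVec_apply, mul_apply, transpose_apply, of_apply]

theorem vecMul_dotProduct_inv_transpose_mul_self_mulVec [DecidableEq m] [CommRing α]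
    {M : Matrix m m α} (hM : IsUnit M) (b : m → α) :
    (b ᵥ* M) ⬝ᵥ ((Mᵀ * M)⁻¹ *ᵥ (b ᵥ* M)) = b ⬝ᵥ b := by
  have hdet : IsUnit M.det := (isUnit_iff_isUnit_det M).mp hM
  have hdetT : IsUnit Mᵀ.det := by rwa [det_transpose]
  rw [Matrix.mul_inv_rev, ← mulVec_transpose, mulVec_mulVec, Matrix.mul_assoc,
    nonsing_inv_mul _ hdetT, Matrix.mul_one, mulVec_transpose, dotProduct_mulVec, vecMul_vecMul,
    mul_nonsing_inv _ hdet, vecMul_one]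

theorem sum_sq_sum_smul_le [CommRing α] [LinearOrder α] [IsStrictOrderedRing α] [Fintype n]
    (b : m → α) (q : m → n → α) :
    ∑ j, (∑ i, b i • q i) j ^ 2 ≤ (∑ i, b i ^ 2) * ∑ i, ∑ j, q i j ^ 2 := by
  calc ∑ j, (∑ i, b i • q i) j ^ 2
      ≤ ∑ j, (∑ i, b i ^ 2) * ∑ i, q i j ^ 2 := by
        gcongr with j
        simpa only [Finset.sum_apply, Pi.smul_apply, smul_eq_mul] using
          sum_mul_sq_le_sq_mul_sq _ _ _
    _ = (∑ i, b i ^ 2) * ∑ i, ∑ j, q i j ^ 2 := by rw [← mul_sum, sum_comm]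

theorem sum_sq_le_card_mul_sq_of_abs_le [CommRing α] [LinearOrder α] [IsStrictOrderedRing α]
    {b : m → α} {c : α} (hb : ∀ i, |b i| ≤ c) :
    ∑ i, b i ^ 2 ≤ Fintype.card m * c ^ 2 := by
  calc ∑ i, b i ^ 2 ≤ ∑ _i : m, c ^ 2 :=
        sum_le_sum fun i _ => sq_le_sq' (abs_le.mp (hb i)).1 (abs_le.mp (hb i)).2
    _ = Fintype.card m * c ^ 2 := by rw [sum_const, card_univ, nsmul_eq_mul]

end

theorem barycentric_regularizer_bounds_general
    {d : ℕ} (R β : ℝ)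
    (K : Set (Fin d → ℝ)) (hK : ∀ x ∈ K, ∑ i, x i ^ 2 ≤ R ^ 2)
    (q : Fin d → (Fin d → ℝ)) (hq : LinearIndependent ℝ q) (hqK : ∀ i, q i ∈ K)
    (hspanner : ∀ x ∈ K, ∃ b : Fin d → ℝ, (∀ i, |b i| ≤ β) ∧ x = ∑ i, b i • q i)
    (Q : Matrix (Fin d) (Fin d) ℝ)
    (hQ : Q = ∑ i, Matrix.vecMulVec (q i) (q i)) :
    (∀ x ∈ K, ∀ α : ℝ, 0 < α →
      (1 / 2) * ((α • x) ⬝ᵥ (Q⁻¹ *ᵥ (α • x))) ≤ α ^ 2 * β ^ 2 * d / 2) ∧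
      (∀ z : Fin d → ℝ, (1 / (R ^ 2 * d)) * (∑ i, z i ^ 2) ≤ z ⬝ᵥ (Q⁻¹ *ᵥ z)) := by
  have hM : IsUnit (of q) := linearIndependent_rows_iff_isUnit.mp hq
  have hcoord (b : Fin d → ℝ) : ∑ i, b i • q i = b ᵥ* of q := (vecMul_eq_sum b (of q)).symm
  have hsq (b : Fin d → ℝ) : b ⬝ᵥ b = ∑ i, b i ^ 2 := by simp only [dotProduct, sq]
  rw [hQ, sum_vecMulVec_self_eq_transpose_mul_self]
  constructor
  · rintro x hx α -
    obtain ⟨b, hb, rfl⟩ := hspanner x hx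
    rw [hcoord, ← smul_vecMul, vecMul_dotProduct_inv_transpose_mul_self_mulVec hM, hsq]
    have hcoef := sum_sq_le_card_mul_sq_of_abs_le (b := α • b) (c := |α| * β) fun i => by
      rw [Pi.smul_apply, smul_eq_mul, abs_mul]
      exact mul_le_mul_of_nonneg_left (hb i) (abs_nonneg α)
    rw [Fintype.card_fin, mul_pow, sq_abs] at hcoef
    linarith
  · intro z
    obtain ⟨b, rfl⟩ : ∃ b, b ᵥ* of q = z := vecMul_surjective_iff_isUnit.mpr hM z
    rw [vecMul_dotProduct_inv_transpose_mul_self_mulVec hM, ← hcoord, hsq]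
    have hrows : ∑ i, ∑ j, q i j ^ 2 ≤ R ^ 2 * d :=
      calc ∑ i, ∑ j, q i j ^ 2 ≤ ∑ _i : Fin d, R ^ 2 := sum_le_sum fun i _ => hK (q i) (hqK i)
        _ = R ^ 2 * d := by rw [sum_const, card_univ, Fintype.card_fin, nsmul_eq_mul, mul_comm]
    have hnorm : ∑ j, (∑ i, b i • q i) j ^ 2 ≤ (∑ i, b i ^ 2) * (R ^ 2 * d) :=
      (sum_sq_sum_smul_le b q).trans (by gcongr)
    rw [one_div_mul_eq_div]
    exact div_le_of_le_mul₀ (by positivity) (by positivity) hnorm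

/-- Barycentric regularizer bounds: if `{q_i} ⊂ K ⊂ B(0,R)` is a `β`-barycentric
spanner for `K`, `Q = ∑ q_i q_iᵀ`, and `φ(x) = ½ xᵀ Q⁻¹ x`, then `φ(αx) ≤ α²β²d/2`
for every `x ∈ K` and `α > 0`, and `Q⁻¹ ⪰ (1/(R²d)) I`, i.e. the strong convexity
modulus of `φ` is at least `1/(R²d)`. -/
theorem barycentric_regularizer_bounds
    {d : ℕ} (hd : 0 < d) (R β : ℝ) (hR : 0 < R) (hβ : 0 < β)
    (K : Set (Fin d → ℝ)) (hK : ∀ x ∈ K, ∑ i, x i ^ 2 ≤ R ^ 2)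
    (q : Fin d → (Fin d → ℝ)) (hq : LinearIndependent ℝ q) (hqK : ∀ i, q i ∈ K)
    (hspanner : ∀ x ∈ K, ∃ b : Fin d → ℝ, (∀ i, |b i| ≤ β) ∧ x = ∑ i, b i • q i)
    (Q : Matrix (Fin d) (Fin d) ℝ)
    (hQ : Q = ∑ i, Matrix.vecMulVec (q i) (q i)) :
    (∀ x ∈ K, ∀ α : ℝ, 0 < α →
      (1 / 2) * ((α • x) ⬝ᵥ (Q⁻¹ *ᵥ (α • x))) ≤ α ^ 2 * β ^ 2 * d / 2) ∧
      (∀ z : Fin d → ℝ, (1 / (R ^ 2 * d)) * (∑ i, z i ^ 2) ≤ z ⬝ᵥ (Q⁻¹ *ᵥ z)) :=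
  barycentric_regularizer_bounds_general R β K hK q hq hqK hspanner Q hQ
end

section
/- Let {q_1,...,q_d} be linearly independent vectors in R^d with ||q_i|| <= R, Q = Σ_i q_i q_i^T, and let f in R^d with |q_i^T f| <= LR for each i. Define, for γ in (0,1], the random vector g which with probability γ/d (for each i) equals (d/γ)(q_i^T f) Q^{-1} q_i, and equals 0 with probability 1-γ. Then E[g] = f and E[g^T Q g] <= L² R² d² / γ. -/
/-!
With `Q = ∑ qᵢ qᵢᵀ`, the probability `γ/d` cancels the importance weight `d/γ`, so
`E[g] = Q⁻¹ ∑ (qᵢᵀ f) qᵢ = Q⁻¹ Q f = f`. For the second moment, `Q Q⁻¹ qᵢ = qᵢ` reduces the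
`i`-th term to `(d/γ) (qᵢᵀ f)² qᵢᵀ Q⁻¹ qᵢ`. The leverages `qᵢᵀ Q⁻¹ qᵢ` are nonnegative because
`Q⁻¹` is positive semidefinite, and they sum to `tr (Q⁻¹ Q) = d`; with `|qᵢᵀ f| ≤ L R` this
gives the bound `(d/γ) (L R)² d`.
-/

open Matrix Finset

namespace Matrix

variable {ι n K : Type*} [Fintype ι] [Fintype n]

theorem sum_vecMulVec_self_mulVec [CommSemiring K] (q : ι → n → K) (f : n → K) :
    (∑ i, vecMulVec (q i) (q i)) *ᵥ f = ∑ i, (q i ⬝ᵥ f) • q i := by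
  simp only [sum_mulVec, vecMulVec_mulVec, op_smul_eq_smul]

theorem sum_mulVec_dotProduct_eq_trace [CommSemiring K] (A : Matrix n n K) (q : ι → n → K) :
    ∑ i, A *ᵥ q i ⬝ᵥ q i = trace (A * ∑ i, vecMulVec (q i) (q i)) := by
  simp only [mul_sum, trace_sum, mul_vecMulVec, trace_vecMulVec]

theorem isUnit_sum_vecMulVec_self [Field K] [DecidableEq n] {q : n → n → K}
    (hq : LinearIndependent K q) : IsUnit (∑ i, vecMulVec (q i) (q i)) := by
  have hM : IsUnit (of q) := linearIndependent_rows_iff_isUnit.mp hq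
  have hQ : ∑ i, vecMulVec (q i) (q i) = (of q)ᵀ * of q := by
    ext j k
    simp [sum_apply, vecMulVec_apply, mul_apply]
  rw [hQ]
  exact ((isUnit_transpose _).mpr hM).mul hM

section Field

variable [Field K] [DecidableEq n] {q : ι → n → K} {Q : Matrix n n K}

theorem sum_dotProduct_smul_inv_mulVec (hQ : Q = ∑ i, vecMulVec (q i) (q i)) (hQu : IsUnit Q)
    (f : n → K) : ∑ i, (q i ⬝ᵥ f) • (Q⁻¹ *ᵥ q i) = f := by
  simp_rw [← mulVec_smul, ← mulVec_sum, ← sum_vecMulVec_self_mulVec, ← hQ, mulVec_mulVec,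
    nonsing_inv_mul _ ((isUnit_iff_isUnit_det Q).mp hQu), one_mulVec]

theorem sum_inv_mulVec_dotProduct (hQ : Q = ∑ i, vecMulVec (q i) (q i)) (hQu : IsUnit Q) :
    ∑ i, Q⁻¹ *ᵥ q i ⬝ᵥ q i = Fintype.card n := by
  rw [sum_mulVec_dotProduct_eq_trace, ← hQ, nonsing_inv_mul _ ((isUnit_iff_isUnit_det Q).mp hQu),
    trace_one]

end Field

theorem inv_mulVec_dotProduct_nonneg [DecidableEq n] (q : ι → n → ℝ) (j : ι) :
    0 ≤ (∑ i, vecMulVec (q i) (q i))⁻¹ *ᵥ q j ⬝ᵥ q j := by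
  have hQ : (∑ i, vecMulVec (q i) (q i)).PosSemidef :=
    posSemidef_sum _ fun i _ => by simpa using posSemidef_vecMulVec_self_star (q i)
  simpa [dotProduct_comm] using hQ.inv.dotProduct_mulVec_nonneg (q j)

theorem sum_sq_dotProduct_mul_inv_mulVec_dotProduct_le [DecidableEq n] {q : ι → n → ℝ}
    {Q : Matrix n n ℝ} (hQ : Q = ∑ i, vecMulVec (q i) (q i)) (hQu : IsUnit Q) {f : n → ℝ} {C : ℝ}
    (hf : ∀ i, |q i ⬝ᵥ f| ≤ C) :
    ∑ i, (q i ⬝ᵥ f) ^ 2 * (Q⁻¹ *ᵥ q i ⬝ᵥ q i) ≤ C ^ 2 * Fintype.card n := by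
  calc _ ≤ ∑ i, C ^ 2 * (Q⁻¹ *ᵥ q i ⬝ᵥ q i) := by
        refine sum_le_sum fun i _ => mul_le_mul_of_nonneg_right ?_ ?_
        · exact sq_le_sq' (abs_le.mp (hf i)).1 (abs_le.mp (hf i)).2
        · exact hQ ▸ inv_mulVec_dotProduct_nonneg q i
    _ = C ^ 2 * Fintype.card n := by
        rw [← mul_sum, sum_inv_mulVec_dotProduct hQ hQu]

end Matrix

theorem barycentric_estimator_general
    {d : ℕ} (q : Fin d → (Fin d → ℝ)) (hq : LinearIndependent ℝ q)
    (R : ℝ)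
    (Q : Matrix (Fin d) (Fin d) ℝ)
    (hQ : Q = ∑ i, Matrix.vecMulVec (q i) (q i))
    (f : Fin d → ℝ) (L : ℝ) (hf : ∀ i, |q i ⬝ᵥ f| ≤ L * R)
    (γ : ℝ) (hγ0 : 0 < γ) :
    (∑ i, (γ / d) • (((d / γ) * (q i ⬝ᵥ f)) • (Q⁻¹ *ᵥ q i)) = f) ∧
      (∑ i, (γ / d) * (((d / γ) * (q i ⬝ᵥ f)) ^ 2 *
          ((Q⁻¹ *ᵥ q i) ⬝ᵥ (Q *ᵥ (Q⁻¹ *ᵥ q i)))) ≤ L ^ 2 * R ^ 2 * d ^ 2 / γ) := by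
  have hQu : IsUnit Q := hQ ▸ isUnit_sum_vecMulVec_self hq
  have hQQ : ∀ i, Q *ᵥ (Q⁻¹ *ᵥ q i) = q i := fun i => by
    rw [mulVec_mulVec, mul_nonsing_inv _ ((isUnit_iff_isUnit_det Q).mp hQu), one_mulVec]
  -- an index `i : Fin d` can only exist when `d ≠ 0`, which the cancellation needs
  have hweight : ∀ _ : Fin d, γ / d * (d / γ) = 1 := fun i => by
    have : (d : ℝ) ≠ 0 := by exact_mod_cast i.pos.ne'
    field_simp
  constructor
  · calc _ = ∑ i, (q i ⬝ᵥ f) • (Q⁻¹ *ᵥ q i) := sum_congr rfl fun i _ => by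
          rw [smul_smul, ← mul_assoc, hweight i, one_mul]
      _ = f := sum_dotProduct_smul_inv_mulVec hQ hQu f
  · calc _ = d / γ * ∑ i, (q i ⬝ᵥ f) ^ 2 * (Q⁻¹ *ᵥ q i ⬝ᵥ q i) := by
          rw [mul_sum]
          refine sum_congr rfl fun i _ => ?_
          rw [hQQ i]
          linear_combination (d / γ * (q i ⬝ᵥ f) ^ 2 * (Q⁻¹ *ᵥ q i ⬝ᵥ q i)) * hweight i
      _ ≤ d / γ * ((L * R) ^ 2 * d) := by
          gcongr
          simpa using sum_sq_dotProduct_mul_inv_mulVec_dotProduct_le hQ hQu hf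
      _ = L ^ 2 * R ^ 2 * d ^ 2 / γ := by ring

/-- Unbiasedness and variance bound for the barycentric loss estimator: the random
vector `g` equal to `(d/γ)(q_iᵀ f) Q⁻¹ q_i` with probability `γ/d` (for each `i`) and
`0` with probability `1 - γ` satisfies `E[g] = f` and `E[gᵀ Q g] ≤ L²R²d²/γ`. -/
theorem barycentric_estimator
    {d : ℕ} (hd : 0 < d) (q : Fin d → (Fin d → ℝ)) (hq : LinearIndependent ℝ q)
    (R : ℝ) (hR : 0 < R) (hnorm : ∀ i, ∑ j, q i j ^ 2 ≤ R ^ 2)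
    (Q : Matrix (Fin d) (Fin d) ℝ)
    (hQ : Q = ∑ i, Matrix.vecMulVec (q i) (q i))
    (f : Fin d → ℝ) (L : ℝ) (hL : 0 ≤ L) (hf : ∀ i, |q i ⬝ᵥ f| ≤ L * R)
    (γ : ℝ) (hγ0 : 0 < γ) (hγ1 : γ ≤ 1) :
    (∑ i, (γ / d) • (((d / γ) * (q i ⬝ᵥ f)) • (Q⁻¹ *ᵥ q i)) = f) ∧
      (∑ i, (γ / d) * (((d / γ) * (q i ⬝ᵥ f)) ^ 2 *
          ((Q⁻¹ *ᵥ q i) ⬝ᵥ (Q *ᵥ (Q⁻¹ *ᵥ q i)))) ≤ L ^ 2 * R ^ 2 * d ^ 2 / γ) :=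
  barycentric_estimator_general q hq R Q hQ f L hf γ hγ0
end
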